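/- If additionally the mean shift lies entirely in the signal subspace, i.e. U Uᵀ μ = μ, and n > d, then for every α ∈ ℝ the penalty term of the self-supervised loss satisfies (2·α·d/(n − d)) · E[‖(Iₙ − U Uᵀ) y‖²] = 2·α·d·s². -/

import Mathlib

open MeasureTheory ProbabilityTheory Matrix

/-! `1 - U Uᵀ` is the orthogonal projection onto the complement of the signal subspace, so it kills
both `U c` and `μ` and leaves `(1 - U Uᵀ) z`. For isotropic noise `E‖A z‖² = s² tr (A Aᵀ)`, and the
trace of the projection is its rank `n - d`. -/

section SecondMoment

variable {ι κ Ω : Type*} [Fintype ι] [Fintype κ] [MeasurableSpace Ω] {μ : Measure Ω}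

theorem integral_sum_sq_mulVec_eq_trace (A : Matrix ι κ ℝ) (z : Ω → κ → ℝ)
    (hz : ∀ j, MemLp (fun ω => z ω j) 2 μ) :
    ∫ ω, ∑ i, (A *ᵥ z ω) i ^ 2 ∂μ =
      (A * Matrix.of (fun j k => ∫ ω, z ω j * z ω k ∂μ) * Aᵀ).trace := by
  have hint : ∀ j k, Integrable (fun ω => z ω j * z ω k) μ := fun j k =>
    (hz j).integrable_mul (hz k)
  have hexpand : ∀ ω, ∑ i, (A *ᵥ z ω) i ^ 2 =
      ∑ i, ∑ j, ∑ k, A i j * A i k * (z ω j * z ω k) := fun ω => by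
    refine Finset.sum_congr rfl fun i _ => ?_
    rw [mulVec, dotProduct, sq, Finset.sum_mul_sum]
    exact Finset.sum_congr rfl fun j _ => Finset.sum_congr rfl fun k _ => by ring
  simp only [hexpand]
  rw [integral_finsetSum _ fun i _ => integrable_finsetSum _ fun j _ =>
    integrable_finsetSum _ fun k _ => (hint j k).const_mul _, trace]
  refine Finset.sum_congr rfl fun i _ => ?_
  rw [integral_finsetSum _ fun j _ => integrable_finsetSum _ fun k _ => (hint j k).const_mul _,
    diag_apply]
  simp only [mul_apply, Finset.sum_mul]
  rw [Finset.sum_comm]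
  refine Finset.sum_congr rfl fun j _ => ?_
  rw [integral_finsetSum _ fun k _ => (hint j k).const_mul _]
  refine Finset.sum_congr rfl fun k _ => ?_
  rw [integral_const_mul, transpose_apply, of_apply]
  ring

end SecondMoment

section Projection

variable {m k R : Type*} [Fintype m] [Fintype k] [DecidableEq m] [DecidableEq k] [CommRing R]
  {U : Matrix m k R}

theorem one_sub_mul_transpose_mul_eq_zero (hU : Uᵀ * U = 1) : (1 - U * Uᵀ) * U = 0 := by
  rw [Matrix.sub_mul, Matrix.mul_assoc, hU, Matrix.mul_one, Matrix.one_mul, sub_self]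

theorem one_sub_mul_transpose_mulVec_mulVec_add_add (hU : Uᵀ * U = 1) {μ : m → R}
    (hμ : (U * Uᵀ) *ᵥ μ = μ) (c : k → R) (z : m → R) :
    (1 - U * Uᵀ) *ᵥ (U *ᵥ c + μ + z) = (1 - U * Uᵀ) *ᵥ z := by
  rw [mulVec_add, mulVec_add, mulVec_mulVec, one_sub_mul_transpose_mul_eq_zero hU, sub_mulVec, hμ,
    one_mulVec, zero_mulVec, sub_self, zero_add, zero_add]

theorem trace_one_sub_mul_transpose_mul_transpose (hU : Uᵀ * U = 1) :
    ((1 - U * Uᵀ) * (1 - U * Uᵀ)ᵀ).trace = (Fintype.card m : R) - Fintype.card k := by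
  have hidem : (1 - U * Uᵀ) * (1 - U * Uᵀ)ᵀ = 1 - U * Uᵀ := by
    rw [transpose_sub, transpose_one, transpose_mul, transpose_transpose, Matrix.mul_sub,
      Matrix.mul_one, ← Matrix.mul_assoc, one_sub_mul_transpose_mul_eq_zero hU, Matrix.zero_mul,
      sub_zero]
  rw [hidem, trace_sub, trace_one, trace_mul_comm, hU, trace_one]

end Projection

theorem stmt_11_general (n d : ℕ)
    (U : Matrix (Fin n) (Fin d) ℝ) (hU : Uᵀ * U = 1)
    (μ : Fin n → ℝ) (s : ℝ)
    {Ω : Type*} [MeasureSpace Ω]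
    (c : Ω → Fin d → ℝ) (z : Ω → Fin n → ℝ)
    (hz2 : ∀ i, MemLp (fun ω => z ω i) 2)
    (hzcov : ∀ i j, ∫ ω, z ω i * z ω j = if i = j then s ^ 2 else 0)
    (y : Ω → Fin n → ℝ) (hy : ∀ ω, y ω = U.mulVec (c ω) + μ + z ω)
    (hμ : (U * Uᵀ).mulVec μ = μ) (hnd : d < n) (α : ℝ) :
    2 * α * d / ((n : ℝ) - d) *
        ∫ ω, ∑ i, (((1 : Matrix (Fin n) (Fin n) ℝ) - U * Uᵀ).mulVec (y ω) i) ^ 2 =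
      2 * α * d * s ^ 2 := by
  have hcov : Matrix.of (fun j k => ∫ ω, z ω j * z ω k) =
      s ^ 2 • (1 : Matrix (Fin n) (Fin n) ℝ) := by
    ext j k
    rw [of_apply, hzcov, Matrix.smul_apply, one_apply, smul_ite, smul_eq_mul, mul_one, smul_zero]
  have hpenalty : ∫ ω, ∑ i, ((1 - U * Uᵀ) *ᵥ y ω) i ^ 2 = s ^ 2 * ((n : ℝ) - d) := by
    simp_rw [hy, one_sub_mul_transpose_mulVec_mulVec_add_add hU hμ]
    rw [integral_sum_sq_mulVec_eq_trace _ _ hz2, hcov, Matrix.mul_smul, Matrix.mul_one,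
      Matrix.smul_mul, trace_smul, trace_one_sub_mul_transpose_mul_transpose hU,
      Fintype.card_fin, Fintype.card_fin, smul_eq_mul]
  have hnd' : (n : ℝ) - d ≠ 0 := sub_ne_zero.mpr (by exact_mod_cast hnd.ne')
  rw [hpenalty]
  field_simp

theorem stmt_11 (n d : ℕ) (hn : 0 < n) (hd : 0 < d) (hdn : d ≤ n)
    (U : Matrix (Fin n) (Fin d) ℝ) (hU : Uᵀ * U = 1)
    (μ : Fin n → ℝ) (s : ℝ)
    {Ω : Type*} [MeasureSpace Ω] [IsProbabilityMeasure (volume : Measure Ω)]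
    (c : Ω → Fin d → ℝ) (z : Ω → Fin n → ℝ)
    (hmc : Measurable c) (hmz : Measurable z)
    (hindep : IndepFun c z)
    (hc2 : ∀ i, MemLp (fun ω => c ω i) 2)
    (hz2 : ∀ i, MemLp (fun ω => z ω i) 2)
    (hcmean : ∀ i, ∫ ω, c ω i = 0)
    (hccov : ∀ i j, ∫ ω, c ω i * c ω j = if i = j then 1 else 0)
    (hzmean : ∀ i, ∫ ω, z ω i = 0)
    (hzcov : ∀ i j, ∫ ω, z ω i * z ω j = if i = j then s ^ 2 else 0)
    (y : Ω → Fin n → ℝ) (hy : ∀ ω, y ω = U.mulVec (c ω) + μ + z ω)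
    (hμ : (U * Uᵀ).mulVec μ = μ) (hnd : d < n) (α : ℝ) :
    2 * α * d / ((n : ℝ) - d) *
        ∫ ω, ∑ i, (((1 : Matrix (Fin n) (Fin n) ℝ) - U * Uᵀ).mulVec (y ω) i) ^ 2 =
      2 * α * d * s ^ 2 :=
  stmt_11_general n d U hU μ s c z hz2 hzcov y hy hμ hnd α
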